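/- Fix c > 0 and let h(x) = (1/√5 - x)^{-p} + 9·(1/√5 + x/9 + c x²)^{-p} on [0, 1/(2√5)]. If p > 18c then h is monotonically increasing on [0, 1/(2√5)] and attains its minimum 10·5^{p/2} uniquely at x = 0. -/

import Mathlib

/-- The comparison function `h(x) = (1/√5 - x)^{-p} + 9·(1/√5 + x/9 + c·x²)^{-p}`. -/
noncomputable def hfun (c p x : ℝ) : ℝ :=
  (1 / Real.sqrt 5 - x) ^ (-p) + 9 * (1 / Real.sqrt 5 + x / 9 + c * x ^ 2) ^ (-p)

lemma hfun_hasDerivAt (c p x : ℝ) (h1 : 0 < 1 / Real.sqrt 5 - x)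
    (h2 : 0 < 1 / Real.sqrt 5 + x / 9 + c * x ^ 2) :
    HasDerivAt (hfun c p)
      (p * (1 / Real.sqrt 5 - x) ^ (-p - 1)
        - 9 * p * (1 / 9 + 2 * c * x) * (1 / Real.sqrt 5 + x / 9 + c * x ^ 2) ^ (-p - 1)) x := by
  set a := 1 / Real.sqrt 5 with ha
  have d1 : HasDerivAt (fun y : ℝ => a - y) (-1) x := by
    simpa using (hasDerivAt_id x).const_sub a
  have d2 : HasDerivAt (fun y : ℝ => a + y / 9 + c * y ^ 2) (1 / 9 + 2 * c * x) x := by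
    have : HasDerivAt (fun y : ℝ => a + y / 9 + c * y ^ 2)
        (0 + 1 / 9 + c * (2 * x)) x := by
      exact (((hasDerivAt_const x a).add ((hasDerivAt_id x).div_const 9)).add
        (((hasDerivAt_pow 2 x)).const_mul c))
      |>.congr_deriv (by push_cast; ring) |>.congr_deriv rfl
    convert this using 1; push_cast; ring
  have r1 : HasDerivAt (fun y : ℝ => y ^ (-p)) (-p * (a - x) ^ (-p - 1)) (a - x) :=
    Real.hasDerivAt_rpow_const (Or.inl h1.ne')
  have r2 : HasDerivAt (fun y : ℝ => y ^ (-p))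
      (-p * (a + x / 9 + c * x ^ 2) ^ (-p - 1)) (a + x / 9 + c * x ^ 2) :=
    Real.hasDerivAt_rpow_const (Or.inl h2.ne')
  have D1 : HasDerivAt (fun y : ℝ => (a - y) ^ (-p)) (-p * (a - x) ^ (-p - 1) * (-1)) x :=
    r1.comp x d1
  have D2 : HasDerivAt (fun y : ℝ => (a + y / 9 + c * y ^ 2) ^ (-p))
      (-p * (a + x / 9 + c * x ^ 2) ^ (-p - 1) * (1 / 9 + 2 * c * x)) x :=
    HasDerivAt.comp (h := fun y : ℝ => a + y / 9 + c * y ^ 2) x r2 d2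
  have := D1.add (D2.const_mul 9)
  exact this.congr_deriv (by ring)

/-- For `c > 0` and `p > 18c`, the function `h` is monotone increasing on
`[0, 1/(2√5)]` and attains its minimum `10·5^{p/2}` uniquely at `x = 0`. -/
theorem hfun_monotone_min (c p : ℝ) (hc : 0 < c) (hp : 18 * c < p) :
    MonotoneOn (hfun c p) (Set.Icc 0 (1 / (2 * Real.sqrt 5))) ∧
    hfun c p 0 = 10 * 5 ^ (p / 2) ∧
    ∀ x ∈ Set.Icc (0:ℝ) (1 / (2 * Real.sqrt 5)), x ≠ 0 →
      hfun c p 0 < hfun c p x := by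
  have hp0 : 0 < p := lt_trans (by positivity) hp
  have hs5 : (0:ℝ) < Real.sqrt 5 := Real.sqrt_pos.mpr (by norm_num)
  have hs5' : 1 < Real.sqrt 5 := by
    have := Real.lt_sqrt (x := 1) (y := 5) (by norm_num)
    simpa using this.mpr (by norm_num)
  set a : ℝ := 1 / Real.sqrt 5 with ha
  have ha0 : 0 < a := by positivity
  have ha1 : a < 1 := by rw [ha, div_lt_one hs5]; exact hs5'
  set b : ℝ := 1 / (2 * Real.sqrt 5) with hb
  have hba : b < a := by
    rw [hb, ha, div_lt_div_iff₀ (by positivity) hs5]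
    nlinarith
  have hb0 : 0 < b := by positivity
  -- positivity of bases on the interval
  have base1 : ∀ x ∈ Set.Icc (0:ℝ) b, 0 < a - x := fun x hx => by
    have := hx.2; linarith
  have base2 : ∀ x ∈ Set.Icc (0:ℝ) b, 0 < a + x / 9 + c * x ^ 2 := fun x hx => by
    have h1 := hx.1; nlinarith
  -- strict monotonicity
  have hsm : StrictMonoOn (hfun c p) (Set.Icc 0 b) := by
    apply strictMonoOn_of_deriv_pos (convex_Icc 0 b)
    · intro x hx
      exact ((hfun_hasDerivAt c p x (base1 x hx) (base2 x hx)).continuousAt).continuousWithinAt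
    · intro x hx
      rw [interior_Icc] at hx
      obtain ⟨hx0, hxb⟩ := hx
      have hxI : x ∈ Set.Icc (0:ℝ) b := ⟨hx0.le, hxb.le⟩
      have hA : 0 < a - x := base1 x hxI
      have hB : 0 < a + x / 9 + c * x ^ 2 := base2 x hxI
      rw [(hfun_hasDerivAt c p x hA hB).deriv]
      -- key inequality
      set A := a - x with hA'
      set B := a + x / 9 + c * x ^ 2 with hB'
      have hd : B = A + (10 * x / 9 + c * x ^ 2) := by rw [hA', hB']; ring
      set d : ℝ := 10 * x / 9 + c * x ^ 2 with hd'
      have hd0 : 0 < d := by positivity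
      have key : (1 + 18 * c * x) * A ^ (p + 1) < B ^ (p + 1) := by
        have hBeq : B = A * (1 + d / A) := by
          rw [hd]; field_simp
        have hmul : B ^ (p + 1) = A ^ (p + 1) * (1 + d / A) ^ (p + 1) := by
          rw [hBeq, Real.mul_rpow hA.le (by positivity)]
        have hbern : 1 + (p + 1) * (d / A) ≤ (1 + d / A) ^ (p + 1) :=
          one_add_mul_self_le_rpow_one_add
            (by have := div_nonneg hd0.le hA.le; linarith) (by linarith)
        have hstep : 1 + 18 * c * x < 1 + (p + 1) * (d / A) := by
          rw [add_lt_add_iff_left, ← mul_div_assoc, lt_div_iff₀ hA]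
          have hA1 : A < 1 := by rw [hA']; linarith
          rw [hd']
          have f1 : 0 < 18 * c * x * (1 - A) :=
            mul_pos (by positivity) (by linarith)
          have f2 : 0 < (p - 18 * c) * x := mul_pos (by linarith) hx0
          have f3 : 0 ≤ (p + 1) * (c * x ^ 2) := by positivity
          have f4 : 0 < (p / 9 + 10 / 9) * x := mul_pos (by linarith) hx0
          nlinarith [f1, f2, f3, f4]
        have hApos : (0:ℝ) < A ^ (p + 1) := Real.rpow_pos_of_pos hA _
        calc (1 + 18 * c * x) * A ^ (p + 1)
            < (1 + (p + 1) * (d / A)) * A ^ (p + 1) := by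
              exact mul_lt_mul_of_pos_right hstep hApos
          _ ≤ (1 + d / A) ^ (p + 1) * A ^ (p + 1) := by
              exact mul_le_mul_of_nonneg_right hbern hApos.le
          _ = B ^ (p + 1) := by rw [hmul]; ring
      -- conclude derivative positive
      have hApos : (0:ℝ) < A ^ (p + 1) := Real.rpow_pos_of_pos hA _
      have hBpos : (0:ℝ) < B ^ (p + 1) := Real.rpow_pos_of_pos hB _
      have eA : A ^ (-p - 1) = (A ^ (p + 1))⁻¹ := by
        rw [show -p - 1 = -(p + 1) by ring, Real.rpow_neg hA.le]
      have eB : B ^ (-p - 1) = (B ^ (p + 1))⁻¹ := by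
        rw [show -p - 1 = -(p + 1) by ring, Real.rpow_neg hB.le]
      have hK : 0 < 1 + 18 * c * x := by positivity
      have hfrac : (1 + 18 * c * x) * (B ^ (p + 1))⁻¹ < (A ^ (p + 1))⁻¹ := by
        rw [lt_inv_comm₀ (by positivity) hApos] at *
        · rw [mul_inv, inv_inv]
          calc A ^ (p+1) < (1 + 18*c*x)⁻¹ * B ^ (p+1) := by
                rw [lt_inv_mul_iff₀ hK]; linarith [key]
            _ = (1 + 18*c*x)⁻¹ * B^(p+1) := rfl
      have : p * A ^ (-p - 1) - 9 * p * (1 / 9 + 2 * c * x) * B ^ (-p - 1)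
          = p * (A ^ (-p-1) - (1 + 18 * c * x) * B ^ (-p-1)) := by ring
      rw [this, eA, eB]
      have := sub_pos.mpr hfrac
      positivity
  have hval : hfun c p 0 = 10 * 5 ^ (p / 2) := by
    have h5 : Real.sqrt 5 = (5:ℝ) ^ ((1:ℝ)/2) := Real.sqrt_eq_rpow 5
    have key : (Real.sqrt 5)⁻¹ ^ (-p) = (5:ℝ) ^ (p / 2) := by
      rw [h5, ← Real.rpow_neg (by norm_num : (0:ℝ) ≤ 5),
        ← Real.rpow_mul (by norm_num : (0:ℝ) ≤ 5)]
      congr 1; ring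
    have e : hfun c p 0 = (Real.sqrt 5)⁻¹ ^ (-p) + 9 * (Real.sqrt 5)⁻¹ ^ (-p) := by
      unfold hfun; norm_num
    rw [e, key]; ring
  refine ⟨hsm.monotoneOn, hval, ?_⟩
  intro x hx hxne
  have hx0 : 0 < x := lt_of_le_of_ne hx.1 (Ne.symm hxne)
  exact hsm (Set.left_mem_Icc.mpr hb0.le) hx hx0
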